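/- Every category is a polynomial comonad (the other direction of the Ahman–Uustalu theorem): let C be a category with object type O, and let P be the polynomial functor with positions O and directions at c given by Σ (d : O), (c ⟶ d) (all morphisms out of c). Then the maps ε_X (c, k) = k (c, 𝟙 c) and δ_X (c, k) = (c, fun (d, f) ↦ (d, fun (e, g) ↦ k (e, f ≫ g))) are natural transformations from the associated functor of P to the identity functor and to the composite of the associated functor of P with itself, respectively, and they satisfy the counit laws and coassociativity, i.e. they make the associated functor of P a comonad. -/

import Mathlib

open CategoryTheory

universe u

/-- The associated functor `Type u ⥤ Type u` of a polynomial functor. -/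
def PFunctor.toFunctor (P : PFunctor.{u}) : Type u ⥤ Type u where
  obj X := P.Obj X
  map f := TypeCat.ofHom (fun x => P.map f x)
  map_id := by intro X; apply ConcreteCategory.hom_ext; intro x; first | exact P.id_map x | rfl | simp
  map_comp := by intro X Y Z f g; apply ConcreteCategory.hom_ext; intro x; first | exact (P.map_map f g x).symm | rfl | simp

/-- The polynomial functor associated to a category: positions are objects, and directions at
`c` are the outgoing morphisms `Σ (d : O), (c ⟶ d)`. -/
def catPoly (O : Type u) [Category.{u} O] : PFunctor.{u} :=
  ⟨O, fun c => Σ d : O, (c ⟶ d)⟩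

/-! `restrict f k` precomposes `k` with `f ≫ -`, so the counit and coassociativity laws of the
comonad are the identity and associativity laws of the category, transported through `restrict`. -/

namespace catPoly

variable {O : Type u} [Category.{u} O]

def restrict {X : Type u} {c d : O} (f : c ⟶ d) (k : (Σ e : O, (c ⟶ e)) → X) :
    (Σ e : O, (d ⟶ e)) → X :=
  fun eg => k ⟨eg.1, f ≫ eg.2⟩

lemma restrict_id {X : Type u} {c : O} (k : (Σ e : O, (c ⟶ e)) → X) : restrict (𝟙 c) k = k := by
  funext ⟨e, g⟩
  simp [restrict]

lemma restrict_apply_id {X : Type u} {c d : O} (f : c ⟶ d) (k : (Σ e : O, (c ⟶ e)) → X) :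
    restrict f k ⟨d, 𝟙 d⟩ = k ⟨d, f⟩ := by
  simp [restrict]

lemma restrict_restrict {X : Type u} {c d e : O} (f : c ⟶ d) (g : d ⟶ e)
    (k : (Σ a : O, (c ⟶ a)) → X) : restrict g (restrict f k) = restrict (f ≫ g) k := by
  funext ⟨a, h⟩
  simp [restrict]

variable (O)

def counit : (catPoly O).toFunctor ⟶ 𝟭 (Type u) where
  app X := TypeCat.ofHom fun x : Σ c : O, (Σ d : O, (c ⟶ d)) → X => x.2 ⟨x.1, 𝟙 x.1⟩

def comul : (catPoly O).toFunctor ⟶ (catPoly O).toFunctor ⋙ (catPoly O).toFunctor where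
  app X := TypeCat.ofHom fun x : Σ c : O, (Σ d : O, (c ⟶ d)) → X =>
    (⟨x.1, fun df => ⟨df.1, restrict df.2 x.2⟩⟩ : (catPoly O).Obj ((catPoly O).Obj X))

lemma comul_counit (X : Type u) :
    (comul O).app X ≫ (counit O).app ((catPoly O).toFunctor.obj X) = 𝟙 _ :=
  ConcreteCategory.hom_ext _ _ fun ⟨c, k⟩ => congrArg (Sigma.mk c) (restrict_id k)

lemma comul_map_counit (X : Type u) :
    (comul O).app X ≫ (catPoly O).toFunctor.map ((counit O).app X) = 𝟙 _ :=
  ConcreteCategory.hom_ext _ _ fun ⟨c, k⟩ =>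
    congrArg (Sigma.mk c) (funext fun ⟨_, f⟩ => restrict_apply_id f k)

lemma comul_comul (X : Type u) :
    (comul O).app X ≫ (comul O).app ((catPoly O).toFunctor.obj X) =
      (comul O).app X ≫ (catPoly O).toFunctor.map ((comul O).app X) :=
  ConcreteCategory.hom_ext _ _ fun ⟨c, k⟩ =>
    congrArg (Sigma.mk c) <| funext fun ⟨d, f⟩ => congrArg (Sigma.mk d) <| funext fun ⟨e, g⟩ =>
      congrArg (Sigma.mk e) (restrict_restrict f g k).symm

end catPoly

/-- Ahman–Uustalu, the other direction: every category gives a polynomial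
comonad: the stated maps are natural transformations `ε : P ⟶ Id` and `δ : P ⟶ P ∘ P` on the
associated functor of `catPoly O`, and satisfy the counit laws and coassociativity. -/
theorem stmt_17 (O : Type u) [Category.{u} O] :
    ∃ (ε : (catPoly O).toFunctor ⟶ 𝟭 (Type u))
      (δ : (catPoly O).toFunctor ⟶ (catPoly O).toFunctor ⋙ (catPoly O).toFunctor),
      (∀ (X : Type u) (c : O) (k : (Σ d : O, (c ⟶ d)) → X),
        ε.app X ⟨c, k⟩ = k ⟨c, 𝟙 c⟩) ∧
      (∀ (X : Type u) (c : O) (k : (Σ d : O, (c ⟶ d)) → X),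
        δ.app X ⟨c, k⟩ =
          ⟨c, fun df => ⟨df.1, fun eg => k ⟨eg.1, df.2 ≫ eg.2⟩⟩⟩) ∧
      (∀ X : Type u, δ.app X ≫ ε.app ((catPoly O).toFunctor.obj X) =
        𝟙 ((catPoly O).toFunctor.obj X)) ∧
      (∀ X : Type u, δ.app X ≫ (catPoly O).toFunctor.map (ε.app X) =
        𝟙 ((catPoly O).toFunctor.obj X)) ∧
      (∀ X : Type u, δ.app X ≫ δ.app ((catPoly O).toFunctor.obj X) =
        δ.app X ≫ (catPoly O).toFunctor.map (δ.app X)) :=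
  ⟨catPoly.counit O, catPoly.comul O, fun _ _ _ => rfl, fun _ _ _ => rfl,
    catPoly.comul_counit O, catPoly.comul_map_counit O, catPoly.comul_comul O⟩
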